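/- arXiv:1501.06702 — 3 statements merged into one kernel-verified Lean document; each statement's English description precedes it below -/
import Mathlib

section
/- For 0 < ℓ < 1/2, define x₀(ℓ) = (1 + (1-ℓ)²) / (2(1-ℓ)cos(πℓ)) and X₀(ℓ) = x₀(ℓ) - sqrt(x₀(ℓ)² - 1). Then the supremum over ℓ ∈ (0, 1/2) of (1 - X₀(ℓ))/ℓ equals sqrt(1 + π²). -/
/-!
Write `x₀(ℓ) = 1 + ℓ² q(ℓ)`. Since `1 - cos t = (t²/2) sinc²(t/2)`, the function `q` is continuous
at `0` with `q(0) = (1 + π²)/2`, and `(1 - X₀)/ℓ = √(q (2 + ℓ² q)) - ℓ q`. The right side tends to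
`√(2 q(0)) = √(1 + π²) =: M` as `ℓ → 0⁺`, and it is at most `M` as soon as `2 q (1 - ℓM) ≤ M²`.
That holds because `2 q (1 - ℓ) cos(πℓ) = 1 + (1 - ℓ) π² sinc²(πℓ/2) ≤ M²` while
`1 - ℓM ≤ 1 - 3ℓ ≤ (1 - ℓ)(1 - 2ℓ) ≤ (1 - ℓ) cos(πℓ)`.
-/

/-- Center on the real axis of the circle orthogonal to the unit circle through the
interior corners `(1-ℓ)e^{±iπℓ}` of a Carleson square. -/
noncomputable def x0 (ℓ : ℝ) : ℝ :=
  (1 + (1 - ℓ) ^ 2) / (2 * (1 - ℓ) * Real.cos (Real.pi * ℓ))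

/-- The closest point to the origin of that circle. -/
noncomputable def X0 (ℓ : ℝ) : ℝ := x0 ℓ - Real.sqrt ((x0 ℓ) ^ 2 - 1)

open Real Filter Set Topology

lemma one_sub_cos_eq_mul_sinc_sq (t : ℝ) : 1 - cos t = t ^ 2 / 2 * sinc (t / 2) ^ 2 := by
  rcases eq_or_ne t 0 with rfl | ht
  · simp
  have hcos : cos t = 1 - 2 * sin (t / 2) ^ 2 := by
    have h := cos_two_mul (t / 2)
    rw [mul_div_cancel₀ t two_ne_zero] at h
    rw [h, cos_sq']
    ring
  rw [sinc_of_ne_zero (by positivity), hcos]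
  field_simp
  ring

lemma one_sub_two_mul_le_cos_pi_mul {ℓ : ℝ} (h₀ : 0 ≤ ℓ) (h₁ : ℓ ≤ 1 / 2) :
    1 - 2 * ℓ ≤ cos (π * ℓ) := by
  have h := one_sub_mul_le_cos (x := π * ℓ) (by positivity) (by nlinarith [pi_pos])
  rwa [← mul_assoc, div_mul_cancel₀ 2 pi_ne_zero] at h

lemma one_sub_sub_sqrt_div {ℓ h : ℝ} (hℓ : 0 < ℓ) :
    (1 - (1 + ℓ ^ 2 * h - √((1 + ℓ ^ 2 * h) ^ 2 - 1))) / ℓ =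
      √(h * (2 + ℓ ^ 2 * h)) - ℓ * h := by
  have : (1 + ℓ ^ 2 * h) ^ 2 - 1 = ℓ ^ 2 * (h * (2 + ℓ ^ 2 * h)) := by ring
  rw [this, sqrt_mul (sq_nonneg ℓ), sqrt_sq hℓ.le]
  field_simp
  ring

lemma sqrt_sub_le_of_two_mul_le {ℓ h M : ℝ} (hh : 0 ≤ h) (hℓ : 0 ≤ ℓ) (hM : 0 ≤ M)
    (hbound : 2 * h * (1 - ℓ * M) ≤ M ^ 2) : √(h * (2 + ℓ ^ 2 * h)) - ℓ * h ≤ M := by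
  rw [sub_le_iff_le_add, sqrt_le_left (by positivity)]
  nlinarith

/-- `(x0 ℓ - 1) / ℓ ^ 2`, written so as to be continuous at `ℓ = 0`. -/
noncomputable def x0Coeff (ℓ : ℝ) : ℝ :=
  (1 + (1 - ℓ) * π ^ 2 * sinc (π * ℓ / 2) ^ 2) / (2 * (1 - ℓ) * cos (π * ℓ))

lemma x0_eq_one_add_sq_mul_x0Coeff {ℓ : ℝ} (h : (1 - ℓ) * cos (π * ℓ) ≠ 0) :
    x0 ℓ = 1 + ℓ ^ 2 * x0Coeff ℓ := by
  have hcos := one_sub_cos_eq_mul_sinc_sq (π * ℓ)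
  have hr : 1 - ℓ ≠ 0 := left_ne_zero_of_mul h
  have hc : cos (π * ℓ) ≠ 0 := right_ne_zero_of_mul h
  rw [x0, x0Coeff]
  set c := cos (π * ℓ)
  set s := sinc (π * ℓ / 2)
  field_simp
  linear_combination 2 * (1 - ℓ) * hcos

lemma x0Coeff_nonneg {ℓ : ℝ} (hℓ : ℓ ∈ Ioo 0 (1 / 2)) : 0 ≤ x0Coeff ℓ := by
  have hc := one_sub_two_mul_le_cos_pi_mul hℓ.1.le hℓ.2.le
  have hr : 0 < 1 - ℓ := by linarith [hℓ.2]
  have hc_pos : 0 < cos (π * ℓ) := by linarith [hℓ.2]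
  unfold x0Coeff
  positivity

lemma one_sub_X0_div_eq {ℓ : ℝ} (hℓ : ℓ ∈ Ioo 0 (1 / 2)) :
    (1 - X0 ℓ) / ℓ = √(x0Coeff ℓ * (2 + ℓ ^ 2 * x0Coeff ℓ)) - ℓ * x0Coeff ℓ := by
  have hc := one_sub_two_mul_le_cos_pi_mul hℓ.1.le hℓ.2.le
  have hrc : (1 - ℓ) * cos (π * ℓ) ≠ 0 := mul_ne_zero (by linarith [hℓ.2]) (by linarith [hℓ.2])
  rw [X0, x0_eq_one_add_sq_mul_x0Coeff hrc, one_sub_sub_sqrt_div hℓ.1]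

lemma two_mul_x0Coeff_mul_le {ℓ : ℝ} (hℓ : ℓ ∈ Ioo 0 (1 / 2)) :
    2 * x0Coeff ℓ * (1 - ℓ * √(1 + π ^ 2)) ≤ 1 + π ^ 2 := by
  obtain ⟨h₀, h₁⟩ := hℓ
  have hc := one_sub_two_mul_le_cos_pi_mul h₀.le h₁.le
  have hs : sinc (π * ℓ / 2) ^ 2 ≤ 1 := (sq_le_one_iff_abs_le_one _).2 (abs_sinc_le_one _)
  have hM : 3 ≤ √(1 + π ^ 2) := le_sqrt_of_sq_le (by nlinarith [pi_gt_three])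
  have hrc : 1 - ℓ * √(1 + π ^ 2) ≤ (1 - ℓ) * cos (π * ℓ) := by nlinarith
  have hid : 2 * x0Coeff ℓ * ((1 - ℓ) * cos (π * ℓ)) =
      1 + (1 - ℓ) * π ^ 2 * sinc (π * ℓ / 2) ^ 2 := by
    have hr : 1 - ℓ ≠ 0 := by linarith
    have hc : cos (π * ℓ) ≠ 0 := by linarith
    unfold x0Coeff
    set c := cos (π * ℓ)
    field_simp
  calc 2 * x0Coeff ℓ * (1 - ℓ * √(1 + π ^ 2))
      ≤ 2 * x0Coeff ℓ * ((1 - ℓ) * cos (π * ℓ)) := by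
        have := x0Coeff_nonneg ⟨h₀, h₁⟩
        gcongr
    _ = 1 + (1 - ℓ) * π ^ 2 * sinc (π * ℓ / 2) ^ 2 := hid
    _ ≤ 1 + π ^ 2 := by
        have : (1 - ℓ) * sinc (π * ℓ / 2) ^ 2 ≤ 1 := mul_le_one₀ (by linarith) (sq_nonneg _) hs
        nlinarith [mul_nonneg (sq_nonneg π) (sub_nonneg.2 this)]

lemma continuousAt_x0Coeff : ContinuousAt x0Coeff 0 := by
  unfold x0Coeff
  fun_prop (disch := simp)

lemma tendsto_sqrt_x0Coeff_sub :
    Tendsto (fun ℓ ↦ √(x0Coeff ℓ * (2 + ℓ ^ 2 * x0Coeff ℓ)) - ℓ * x0Coeff ℓ) (𝓝[>] 0)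
      (𝓝 √(1 + π ^ 2)) := by
  have h : ContinuousAt (fun ℓ ↦ √(x0Coeff ℓ * (2 + ℓ ^ 2 * x0Coeff ℓ)) - ℓ * x0Coeff ℓ) 0 := by
    have := continuousAt_x0Coeff
    fun_prop
  have h0 : x0Coeff 0 = (1 + π ^ 2) / 2 := by simp [x0Coeff]
  convert h.tendsto.mono_left nhdsWithin_le_nhds using 2
  rw [h0]
  ring_nf

theorem sup_one_sub_X0_div :
    sSup ((fun ℓ : ℝ => (1 - X0 ℓ) / ℓ) '' Set.Ioo (0 : ℝ) (1 / 2)) =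
      Real.sqrt (1 + Real.pi ^ 2) := by
  have hEq : EqOn (fun ℓ ↦ (1 - X0 ℓ) / ℓ)
      (fun ℓ ↦ √(x0Coeff ℓ * (2 + ℓ ^ 2 * x0Coeff ℓ)) - ℓ * x0Coeff ℓ) (Ioo 0 (1 / 2)) :=
    fun _ hℓ ↦ one_sub_X0_div_eq hℓ
  rw [hEq.image_eq]
  refine (isLUB_of_mem_closure ?_ ?_).csSup_eq ((nonempty_Ioo.2 (by norm_num)).image _)
  · rintro _ ⟨ℓ, hℓ, rfl⟩
    refine sqrt_sub_le_of_two_mul_le (x0Coeff_nonneg hℓ) hℓ.1.le (sqrt_nonneg _) ?_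
    rw [sq_sqrt (by positivity)]
    exact two_mul_x0Coeff_mul_le hℓ
  · refine mem_closure_of_tendsto tendsto_sqrt_x0Coeff_sub ?_
    filter_upwards [Ioo_mem_nhdsGT (show (0 : ℝ) < 1 / 2 by norm_num)] with ℓ hℓ
    exact mem_image_of_mem _ hℓ
end

section
/- Let f be a non-trivial analytic solution of f'' + A f = 0 on 𝔻, where A is analytic and satisfies sup_{z∈𝔻} (1-|z|²)²|A(z)| < ∞. Then the zero-sequence of f is separated in the pseudo-hyperbolic metric: there exists δ ∈ (0,1) with ρ(z_j, z_k) > δ for any two distinct zeros z_j, z_k of f. -/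
/-!
Around a zero `a`, on the Euclidean disc of radius `ε (1 - ‖a‖)`, the growth bound gives
`‖A‖ ≤ 4 M / (1 - ‖a‖)²`, so `‖f''‖ = ‖A f‖` is at most `4 M / (1 - ‖a‖)² · max ‖f‖`. By the mean
value inequality, a second zero in that disc forces `‖f' a‖`, hence `max ‖f‖`, to be a small
multiple of `max ‖f‖`; so `f` vanishes on the disc and, by the identity theorem, everywhere.
Zeros are thus Euclidean-separated at scale `1 - ‖a‖`, which is pseudo-hyperbolic separation.
-/

open Metric Set

/-- Pseudo-hyperbolic distance on the unit disc. -/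
noncomputable def pd (z w : ℂ) : ℝ :=
  ‖z - w‖ / ‖1 - (starRingEnd ℂ) z * w‖

section TwoZeros

variable {𝕜 G : Type*} [RCLike 𝕜] [NormedAddCommGroup G] [NormedSpace 𝕜 G]
  {f : 𝕜 → G} {a b z : 𝕜} {ρ C K : ℝ}

lemma norm_deriv_sub_deriv_le_of_mem_closedBall
    (hf' : ∀ w ∈ closedBall a ρ, DifferentiableAt 𝕜 (deriv f) w)
    (hC : ∀ w ∈ closedBall a ρ, ‖deriv (deriv f) w‖ ≤ C) (hz : z ∈ closedBall a ρ) :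
    ‖deriv f z - deriv f a‖ ≤ C * ρ := by
  have ha : a ∈ closedBall a ρ := mem_closedBall_self (dist_nonneg.trans hz)
  have hC0 : 0 ≤ C := (norm_nonneg _).trans (hC a ha)
  calc ‖deriv f z - deriv f a‖ ≤ C * ‖z - a‖ :=
        (convex_closedBall a ρ).norm_image_sub_le_of_norm_deriv_le hf' hC ha hz
    _ ≤ C * ρ := by gcongr; rwa [← dist_eq_norm]

lemma norm_deriv_le_of_two_zeros
    (hf : ∀ w ∈ closedBall a ρ, DifferentiableAt 𝕜 f w)
    (hf' : ∀ w ∈ closedBall a ρ, DifferentiableAt 𝕜 (deriv f) w)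
    (hC : ∀ w ∈ closedBall a ρ, ‖deriv (deriv f) w‖ ≤ C)
    (hb : b ∈ closedBall a ρ) (hab : a ≠ b) (ha0 : f a = 0) (hb0 : f b = 0) :
    ‖deriv f a‖ ≤ C * ρ := by
  have ha : a ∈ closedBall a ρ := mem_closedBall_self (dist_nonneg.trans hb)
  -- `f` minus its tangent line at `a` has derivative `f' - f' a`, which is small on the ball.
  have hlin : ‖b - a‖ * ‖deriv f a‖ ≤ C * ρ * ‖b - a‖ := by
    have := (convex_closedBall a ρ).norm_image_sub_le_of_norm_hasDerivWithin_le
      (f := fun w => f w - (w - a) • deriv f a) (f' := fun w => deriv f w - deriv f a)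
      (fun w hw => ((hf w hw).hasDerivAt.sub
        (((hasDerivAt_id w).sub_const a).smul_const (deriv f a))).hasDerivWithinAt.congr_deriv
        (by simp))
      (fun w hw => norm_deriv_sub_deriv_le_of_mem_closedBall hf' hC hw) ha hb
    simpa [ha0, hb0, norm_smul] using this
  have hba : 0 < ‖b - a‖ := norm_pos_iff.mpr (sub_ne_zero.mpr hab.symm)
  nlinarith

theorem eqOn_zero_of_two_zeros
    (hf : ∀ w ∈ closedBall a ρ, DifferentiableAt 𝕜 f w)
    (hf' : ∀ w ∈ closedBall a ρ, DifferentiableAt 𝕜 (deriv f) w)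
    (hK : ∀ w ∈ closedBall a ρ, ‖deriv (deriv f) w‖ ≤ K * ‖f w‖) (hK0 : 0 ≤ K)
    (hKρ : 2 * K * ρ ^ 2 < 1)
    (hb : b ∈ closedBall a ρ) (hab : a ≠ b) (ha0 : f a = 0) (hb0 : f b = 0) :
    EqOn f 0 (closedBall a ρ) := by
  have hρ : 0 ≤ ρ := dist_nonneg.trans hb
  have ha : a ∈ closedBall a ρ := mem_closedBall_self hρ
  obtain ⟨z₀, hz₀, hmax⟩ := (isCompact_closedBall a ρ).exists_isMaxOn ⟨a, ha⟩
    (continuousOn_of_forall_continuousAt fun w hw => (hf w hw).continuousAt).norm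
  set m := ‖f z₀‖
  have hC : ∀ w ∈ closedBall a ρ, ‖deriv (deriv f) w‖ ≤ K * m := fun w hw =>
    (hK w hw).trans (mul_le_mul_of_nonneg_left (hmax hw) hK0)
  have hda : ‖deriv f a‖ ≤ K * m * ρ := norm_deriv_le_of_two_zeros hf hf' hC hb hab ha0 hb0
  have hd : ∀ w ∈ closedBall a ρ, ‖deriv f w‖ ≤ 2 * K * m * ρ := fun w hw => by
    have := norm_deriv_sub_deriv_le_of_mem_closedBall hf' hC hw
    calc ‖deriv f w‖ ≤ ‖deriv f w - deriv f a‖ + ‖deriv f a‖ := norm_le_norm_sub_add _ _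
      _ ≤ 2 * K * m * ρ := by linarith
  have hm : m ≤ 2 * K * ρ ^ 2 * m := by
    have := (convex_closedBall a ρ).norm_image_sub_le_of_norm_deriv_le hf hd ha hz₀
    rw [ha0, sub_zero] at this
    have hza : ‖z₀ - a‖ ≤ ρ := by rwa [← dist_eq_norm]
    calc m ≤ 2 * K * m * ρ * ‖z₀ - a‖ := this
      _ ≤ 2 * K * m * ρ * ρ := by gcongr
      _ = 2 * K * ρ ^ 2 * m := by ring
  have hm0 : m ≤ 0 := by nlinarith [norm_nonneg (f z₀)]
  exact fun w hw => norm_le_zero_iff.mp ((hmax hw).trans hm0)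

end TwoZeros

lemma nonneg_of_sq_one_sub_sq_norm_mul_norm_le {A : ℂ → ℂ} {M : ℝ}
    (hbd : ∀ z ∈ ball (0 : ℂ) 1, (1 - ‖z‖ ^ 2) ^ 2 * ‖A z‖ ≤ M) : 0 ≤ M :=
  (mul_nonneg (sq_nonneg _) (norm_nonneg _)).trans (hbd 0 (mem_ball_self one_pos))

lemma norm_le_div_sq_of_le_one_sub_norm {A : ℂ → ℂ} {M r : ℝ}
    (hbd : ∀ z ∈ ball (0 : ℂ) 1, (1 - ‖z‖ ^ 2) ^ 2 * ‖A z‖ ≤ M) {z : ℂ}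
    (hr : 0 < r) (hrz : r ≤ 1 - ‖z‖) : ‖A z‖ ≤ M / r ^ 2 := by
  have hz : z ∈ ball (0 : ℂ) 1 := mem_ball_zero_iff.mpr (by linarith)
  have hr' : r ≤ 1 - ‖z‖ ^ 2 := by nlinarith [norm_nonneg z]
  rw [le_div_iff₀ (by positivity)]
  calc ‖A z‖ * r ^ 2 ≤ (1 - ‖z‖ ^ 2) ^ 2 * ‖A z‖ := by
        rw [mul_comm]; gcongr
    _ ≤ M := hbd z hz

lemma div_two_add_lt_pd {a b : ℂ} {ε : ℝ} (ha : ‖a‖ < 1) (hb : ‖b‖ < 1) (hε : 0 < ε)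
    (hab : ε * (1 - ‖a‖) < ‖b - a‖) : ε / (2 + ε) < pd a b := by
  have hden : ‖1 - (starRingEnd ℂ) a * b‖ ≤ 2 * (1 - ‖a‖) + ‖b - a‖ := by
    have hsplit : 1 - (starRingEnd ℂ) a * b
        = ((1 - ‖a‖ ^ 2 : ℝ) : ℂ) + (starRingEnd ℂ) a * (a - b) := by
      push_cast; rw [← Complex.conj_mul']; ring
    have hconj : ‖(starRingEnd ℂ) a * (a - b)‖ ≤ ‖b - a‖ := by
      rw [norm_mul, Complex.norm_conj, norm_sub_rev]
      exact mul_le_of_le_one_left (norm_nonneg _) ha.le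
    rw [hsplit]
    refine (norm_add_le _ _).trans (add_le_add ?_ hconj)
    rw [Complex.norm_real, Real.norm_of_nonneg (by nlinarith [norm_nonneg a])]
    nlinarith [norm_nonneg a]
  have hden0 : 0 < ‖1 - (starRingEnd ℂ) a * b‖ := by
    refine norm_pos_iff.mpr (sub_ne_zero.mpr fun h => ?_)
    have : ‖(starRingEnd ℂ) a * b‖ < 1 := by
      rw [norm_mul, Complex.norm_conj]
      nlinarith [norm_nonneg a, norm_nonneg b]
    simp [← h] at this
  rw [pd, norm_sub_rev, div_lt_div_iff₀ (by positivity) hden0]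
  nlinarith

theorem mul_one_sub_norm_lt_norm_sub_of_zeros {A f : ℂ → ℂ} {M ε : ℝ}
    (hf : DifferentiableOn ℂ f (ball (0 : ℂ) 1))
    (hode : ∀ z ∈ ball (0 : ℂ) 1, deriv (deriv f) z + A z * f z = 0)
    (hnt : ∃ z ∈ ball (0 : ℂ) 1, f z ≠ 0)
    (hbd : ∀ z ∈ ball (0 : ℂ) 1, (1 - ‖z‖ ^ 2) ^ 2 * ‖A z‖ ≤ M)
    (hε0 : 0 < ε) (hε : ε ≤ 1 / 2) (hMε : 8 * M * ε ^ 2 < 1)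
    {a b : ℂ} (ha : a ∈ ball (0 : ℂ) 1) (hab : a ≠ b) (hfa : f a = 0) (hfb : f b = 0) :
    ε * (1 - ‖a‖) < ‖b - a‖ := by
  by_contra! hba
  have ha1 : 0 < 1 - ‖a‖ := sub_pos.mpr (mem_ball_zero_iff.mp ha)
  set ρ := ε * (1 - ‖a‖)
  have hρ : 0 < ρ := mul_pos hε0 ha1
  have hboundary : ∀ z ∈ closedBall a ρ, (1 - ‖a‖) / 2 ≤ 1 - ‖z‖ := fun z hz => by
    nlinarith [norm_le_of_mem_closedBall hz]
  have hS : closedBall a ρ ⊆ ball (0 : ℂ) 1 := fun z hz =>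
    mem_ball_zero_iff.mpr (by linarith [hboundary z hz])
  have han : AnalyticOnNhd ℂ f (ball (0 : ℂ) 1) := hf.analyticOnNhd isOpen_ball
  set K := M / ((1 - ‖a‖) / 2) ^ 2
  have hM0 : 0 ≤ M := nonneg_of_sq_one_sub_sq_norm_mul_norm_le hbd
  have hK : ∀ z ∈ closedBall a ρ, ‖deriv (deriv f) z‖ ≤ K * ‖f z‖ := fun z hz => by
    rw [eq_neg_of_add_eq_zero_left (hode z (hS hz)), norm_neg, norm_mul]
    gcongr
    exact norm_le_div_sq_of_le_one_sub_norm hbd (by positivity) (hboundary z hz)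
  have hKρ : 2 * K * ρ ^ 2 < 1 := by
    convert hMε using 1
    simp only [K, ρ]
    field_simp
    ring
  have hzero : EqOn f 0 (closedBall a ρ) :=
    eqOn_zero_of_two_zeros (fun z hz => (han z (hS hz)).differentiableAt)
      (fun z hz => (han.deriv z (hS hz)).differentiableAt) hK (by positivity) hKρ
      (mem_closedBall_iff_norm.mpr hba) hab hfa hfb
  obtain ⟨w, hw, hfw⟩ := hnt
  exact hfw (han.eqOn_zero_of_preconnected_of_eventuallyEq_zero
    (convex_ball (0 : ℂ) 1).isPreconnected ha
    (Filter.eventuallyEq_of_mem (closedBall_mem_nhds a hρ) hzero) hw)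

theorem zeros_separated_of_bounded_coefficient_general (A f : ℂ → ℂ)
    (hf : DifferentiableOn ℂ f (ball (0 : ℂ) 1))
    (hode : ∀ z ∈ ball (0 : ℂ) 1, deriv (deriv f) z + A z * f z = 0)
    (hnt : ∃ z ∈ ball (0 : ℂ) 1, f z ≠ 0)
    (hbd : ∃ M : ℝ, ∀ z ∈ ball (0 : ℂ) 1, (1 - ‖z‖ ^ 2) ^ 2 * ‖A z‖ ≤ M) :
    ∃ δ : ℝ, 0 < δ ∧ δ < 1 ∧ ∀ z₁ ∈ ball (0 : ℂ) 1, ∀ z₂ ∈ ball (0 : ℂ) 1,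
      f z₁ = 0 → f z₂ = 0 → z₁ ≠ z₂ → δ < pd z₁ z₂ := by
  obtain ⟨M, hM⟩ := hbd
  have hM0 : 0 ≤ M := nonneg_of_sq_one_sub_sq_norm_mul_norm_le hM
  set ε := 1 / (2 + 4 * M)
  have hε0 : 0 < ε := by positivity
  have hε : ε ≤ 1 / 2 := one_div_le_one_div_of_le two_pos (by linarith)
  have hMε : 8 * M * ε ^ 2 < 1 := by
    rw [div_pow, one_pow, mul_one_div, div_lt_one (by positivity)]
    nlinarith
  refine ⟨ε / (2 + ε), by positivity, (div_lt_one (by positivity)).mpr (by linarith), ?_⟩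
  intro a ha b hb hfa hfb hab
  exact div_two_add_lt_pd (mem_ball_zero_iff.mp ha) (mem_ball_zero_iff.mp hb) hε0
    (mul_one_sub_norm_lt_norm_sub_of_zeros hf hode hnt hM hε0 hε hMε ha hab hfa hfb)

/-- Schwarz-type separation: zeros of solutions of `f'' + A f = 0` with
`sup (1-|z|²)²|A(z)| < ∞` are separated. -/
theorem zeros_separated_of_bounded_coefficient (A f : ℂ → ℂ)
    (hA : DifferentiableOn ℂ A (ball (0 : ℂ) 1))
    (hf : DifferentiableOn ℂ f (ball (0 : ℂ) 1))
    (hode : ∀ z ∈ ball (0 : ℂ) 1, deriv (deriv f) z + A z * f z = 0)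
    (hnt : ∃ z ∈ ball (0 : ℂ) 1, f z ≠ 0)
    (hbd : ∃ M : ℝ, ∀ z ∈ ball (0 : ℂ) 1, (1 - ‖z‖ ^ 2) ^ 2 * ‖A z‖ ≤ M) :
    ∃ δ : ℝ, 0 < δ ∧ δ < 1 ∧ ∀ z₁ ∈ ball (0 : ℂ) 1, ∀ z₂ ∈ ball (0 : ℂ) 1,
      f z₁ = 0 → f z₂ = 0 → z₁ ≠ z₂ → δ < pd z₁ z₂ :=
  zeros_separated_of_bounded_coefficient_general A f hf hode hnt hbd
end

section
/- Let f be a non-trivial analytic solution of f'' + A f = 0 on 𝔻 with A analytic, and let z_j ≠ z_k be two zeros of f. Then there exists a point ξ on the hyperbolic geodesic segment ⟨z_j, z_k⟩ with (1-|ξ|²)² |A(ξ)| > 1. -/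
/-!
Parametrize the geodesic from `z₁` by hyperbolic arclength, `Γ s = φ (tanh s • ζ)` with
`φ u = (u + z₁) / (1 + z̄₁ u)`, and transport the solution to `G s = f (Γ s) * M s`, where
`M s = cosh s + z̄₁ ζ sinh s` satisfies `Γ' = ζ (1 - |z₁|²) / M²` and `M'' = M`.
Since a Möbius map has vanishing Schwarzian, `G'' = (1 - A(Γ) Γ'²) G`, and `|Γ'| = 1 - |Γ|²`.
If `(1 - |ξ|²)² |A ξ| ≤ 1` along the segment, then `Re ⟨G, G''⟩ ≥ 0`, so `|G|²` is convex;
vanishing at both ends, `G ≡ 0`. Then `f` vanishes along a curve issuing from `z₁`, hence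
identically by the identity theorem.
-/

open Metric

/-- The hyperbolic geodesic segment joining `z` and `w` in the unit disc: the image of the
Euclidean segment `[0, (w-z)/(1-z̄w)]` under the Möbius map `u ↦ (u+z)/(1+z̄u)`. -/
noncomputable def geoSeg (z w : ℂ) : Set ℂ :=
  (fun t : ℝ =>
    ((t : ℂ) * ((w - z) / (1 - (starRingEnd ℂ) z * w)) + z) /
      (1 + (starRingEnd ℂ) z * ((t : ℂ) * ((w - z) / (1 - (starRingEnd ℂ) z * w))))) ''
    Set.Icc (0 : ℝ) 1

open Set Filter Topology
open scoped RealInnerProductSpace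
open Complex (normSq)

theorem eqOn_zero_of_inner_deriv2_nonneg {E : Type*} [NormedAddCommGroup E]
    [InnerProductSpace ℝ E] {G G' G'' : ℝ → E} {a b : ℝ} (hG : ContinuousOn G (Icc a b))
    (hG' : ∀ t ∈ Ioo a b, HasDerivAt G (G' t) t) (hG'' : ∀ t ∈ Ioo a b, HasDerivAt G' (G'' t) t)
    (hinner : ∀ t ∈ Ioo a b, 0 ≤ ⟪G t, G'' t⟫) (ha : G a = 0) (hb : G b = 0) :
    EqOn G 0 (Icc a b) := by
  intro t ht
  have hconvex : ConvexOn ℝ (Icc a b) (‖G ·‖ ^ 2) := by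
    refine convexOn_of_hasDerivWithinAt2_nonneg (convex_Icc a b) (hG.norm.pow 2)
      (f' := fun t => 2 * ⟪G t, G' t⟫) (f'' := fun t => 2 * (⟪G t, G'' t⟫ + ⟪G' t, G' t⟫))
      ?_ ?_ ?_ <;> rw [interior_Icc] <;> intro t ht
    · exact (hG' t ht).norm_sq.hasDerivWithinAt
    · exact (((hG' t ht).inner ℝ (hG'' t ht)).const_mul 2).hasDerivWithinAt
    · have := real_inner_self_nonneg (x := G' t)
      have := hinner t ht
      positivity
  have hle := hconvex.le_max_of_mem_Icc (left_mem_Icc.2 (ht.1.trans ht.2))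
    (right_mem_Icc.2 (ht.1.trans ht.2)) ht
  simpa [ha, hb] using hle

theorem Complex.real_inner_mul_self_nonneg {w : ℂ} (hw : 0 ≤ w.re) (z : ℂ) :
    0 ≤ ⟪z, w * z⟫ := by
  rw [Complex.inner, mul_assoc, Complex.mul_conj, Complex.re_mul_ofReal]
  exact mul_nonneg hw (Complex.normSq_nonneg z)

section Transport

variable {f f' f'' : ℂ → ℂ} {Γ M M' : ℝ → ℂ} {c : ℂ} {t : ℝ}

theorem hasDerivAt_comp_mul (hf : HasDerivAt f (f' (Γ t)) (Γ t))
    (hΓ : HasDerivAt Γ (c / M t ^ 2) t) (hM : HasDerivAt M (M' t) t) (hM0 : M t ≠ 0) :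
    HasDerivAt (fun s => f (Γ s) * M s) (f' (Γ t) * c / M t + f (Γ t) * M' t) t := by
  refine ((hf.comp t hΓ).mul hM).congr_deriv ?_
  simp only [Function.comp_apply]
  field_simp

/-- The `f'`-terms cancel because `Γ' = c / M²`. -/
theorem hasDerivAt_deriv_comp_mul_of_ode {A : ℂ → ℂ} {κ : ℂ}
    (hf : HasDerivAt f (f' (Γ t)) (Γ t)) (hf' : HasDerivAt f' (f'' (Γ t)) (Γ t))
    (hode : f'' (Γ t) + A (Γ t) * f (Γ t) = 0) (hΓ : HasDerivAt Γ (c / M t ^ 2) t)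
    (hM : HasDerivAt M (M' t) t) (hM' : HasDerivAt M' (κ * M t) t) (hM0 : M t ≠ 0) :
    HasDerivAt (fun s => f' (Γ s) * c / M s + f (Γ s) * M' s)
      ((κ - A (Γ t) * (c / M t ^ 2) ^ 2) * (f (Γ t) * M t)) t := by
  refine ((((hf'.comp t hΓ).mul_const c).div hM hM0).add ((hf.comp t hΓ).mul hM')).congr_deriv ?_
  simp only [Function.comp_apply]
  rw [eq_neg_of_add_eq_zero_left hode]
  field_simp
  ring

end Transport

section Mobius

variable {z w : ℂ}

theorem normSq_lt_one_of_mem_ball (hz : z ∈ ball (0 : ℂ) 1) : normSq z < 1 := by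
  rw [Complex.normSq_eq_norm_sq]
  exact pow_lt_one₀ (norm_nonneg z) (mem_ball_zero_iff.1 hz) two_ne_zero

theorem normSq_one_sub_conj_mul_sub (z w : ℂ) :
    normSq (1 - (starRingEnd ℂ) z * w) - normSq (w - z) = (1 - normSq z) * (1 - normSq w) := by
  simp only [Complex.normSq_apply, Complex.sub_re, Complex.sub_im, Complex.mul_re,
    Complex.mul_im, Complex.one_re, Complex.one_im, Complex.conj_re, Complex.conj_im]
  ring

theorem one_sub_conj_mul_ne_zero (hz : z ∈ ball (0 : ℂ) 1) (hw : w ∈ ball (0 : ℂ) 1) :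
    1 - (starRingEnd ℂ) z * w ≠ 0 := by
  have h := normSq_one_sub_conj_mul_sub z w
  have := normSq_lt_one_of_mem_ball hz
  have := normSq_lt_one_of_mem_ball hw
  rw [← Complex.normSq_pos]
  nlinarith [Complex.normSq_nonneg (w - z)]

theorem norm_mobius_lt_one (hz : z ∈ ball (0 : ℂ) 1) (hw : w ∈ ball (0 : ℂ) 1) :
    ‖(w - z) / (1 - (starRingEnd ℂ) z * w)‖ < 1 := by
  have h := normSq_one_sub_conj_mul_sub z w
  have := normSq_lt_one_of_mem_ball hz
  have := normSq_lt_one_of_mem_ball hw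
  rw [norm_div, div_lt_one (norm_pos_iff.2 (one_sub_conj_mul_ne_zero hz hw)),
    ← sq_lt_sq₀ (norm_nonneg _) (norm_nonneg _), Complex.sq_norm, Complex.sq_norm]
  nlinarith

theorem mobius_inv_mobius (hz : z ∈ ball (0 : ℂ) 1) (hw : w ∈ ball (0 : ℂ) 1) :
    ((w - z) / (1 - (starRingEnd ℂ) z * w) + z) /
      (1 + (starRingEnd ℂ) z * ((w - z) / (1 - (starRingEnd ℂ) z * w))) = w := by
  have hden := one_sub_conj_mul_ne_zero hz hw
  have hz' : (1 : ℂ) - (starRingEnd ℂ) z * z ≠ 0 := by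
    rw [← Complex.normSq_eq_conj_mul_self, ← Complex.ofReal_one, ← Complex.ofReal_sub,
      Complex.ofReal_ne_zero]
    exact (sub_pos.2 (normSq_lt_one_of_mem_ball hz)).ne'
  have hnum : (w - z) / (1 - (starRingEnd ℂ) z * w) + z =
      w * (1 - (starRingEnd ℂ) z * z) / (1 - (starRingEnd ℂ) z * w) := by
    rw [div_add' _ _ _ hden]; ring
  have hdenom : 1 + (starRingEnd ℂ) z * ((w - z) / (1 - (starRingEnd ℂ) z * w)) =
      (1 - (starRingEnd ℂ) z * z) / (1 - (starRingEnd ℂ) z * w) := by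
    rw [mul_div_assoc', one_add_div hden]; ring
  rw [hnum, hdenom, div_div_div_cancel_right₀ hden, mul_div_cancel_right₀ _ hz']

end Mobius

noncomputable def geodesicDen (z ζ : ℂ) (s : ℝ) : ℂ :=
  Real.cosh s + (starRingEnd ℂ) z * ζ * Real.sinh s

/-- For `‖ζ‖ = 1` this is `s ↦ (tanh s • ζ + z) / (1 + z̄ tanh s • ζ)` (`geodesicFrom_eq_tanh`),
the geodesic from `z` in direction `ζ` parametrized by arclength for `|dz| / (1 - |z|²)`. -/
noncomputable def geodesicFrom (z ζ : ℂ) (s : ℝ) : ℂ :=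
  (ζ * Real.sinh s + z * Real.cosh s) / geodesicDen z ζ s

section Geodesic

variable {z ζ : ℂ} {s : ℝ}

theorem normSq_geodesicDen_sub (hζ : ‖ζ‖ = 1) (s : ℝ) :
    normSq (geodesicDen z ζ s) - normSq (ζ * Real.sinh s + z * Real.cosh s) = 1 - normSq z := by
  have hζ' : ζ.re * ζ.re + ζ.im * ζ.im = 1 := by
    rw [← Complex.normSq_apply, Complex.normSq_eq_norm_sq, hζ, one_pow]
  simp only [geodesicDen, Complex.normSq_apply, Complex.add_re, Complex.add_im, Complex.mul_re,
    Complex.mul_im, Complex.ofReal_re, Complex.ofReal_im, Complex.conj_re, Complex.conj_im]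
  linear_combination (1 - z.re * z.re - z.im * z.im) * Real.cosh_sq s
    + (z.re * z.re + z.im * z.im - 1) * Real.sinh s ^ 2 * hζ'

theorem geodesicDen_ne_zero (hz : z ∈ ball (0 : ℂ) 1) (hζ : ‖ζ‖ = 1) (s : ℝ) :
    geodesicDen z ζ s ≠ 0 := by
  have h := normSq_geodesicDen_sub (z := z) hζ s
  have := normSq_lt_one_of_mem_ball hz
  rw [← Complex.normSq_pos]
  nlinarith [Complex.normSq_nonneg (ζ * Real.sinh s + z * Real.cosh s)]

theorem hasDerivAt_ofReal_cosh (s : ℝ) :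
    HasDerivAt (fun s : ℝ => (Real.cosh s : ℂ)) (Real.sinh s) s :=
  (Real.hasDerivAt_cosh s).ofReal_comp

theorem hasDerivAt_ofReal_sinh (s : ℝ) :
    HasDerivAt (fun s : ℝ => (Real.sinh s : ℂ)) (Real.cosh s) s :=
  (Real.hasDerivAt_sinh s).ofReal_comp

theorem hasDerivAt_geodesicDen (s : ℝ) :
    HasDerivAt (geodesicDen z ζ) (Real.sinh s + (starRingEnd ℂ) z * ζ * Real.cosh s) s :=
  (hasDerivAt_ofReal_cosh s).add ((hasDerivAt_ofReal_sinh s).const_mul _)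

theorem hasDerivAt_deriv_geodesicDen (s : ℝ) :
    HasDerivAt (fun s : ℝ => (Real.sinh s : ℂ) + (starRingEnd ℂ) z * ζ * Real.cosh s)
      (geodesicDen z ζ s) s :=
  (hasDerivAt_ofReal_sinh s).add ((hasDerivAt_ofReal_cosh s).const_mul _)

theorem hasDerivAt_geodesicFrom (hz : z ∈ ball (0 : ℂ) 1) (hζ : ‖ζ‖ = 1) (s : ℝ) :
    HasDerivAt (geodesicFrom z ζ) (ζ * ((1 - normSq z : ℝ) : ℂ) / geodesicDen z ζ s ^ 2) s := by
  have hnum : HasDerivAt (fun s : ℝ => ζ * Real.sinh s + z * Real.cosh s)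
      (ζ * Real.cosh s + z * Real.sinh s) s :=
    ((hasDerivAt_ofReal_sinh s).const_mul ζ).add ((hasDerivAt_ofReal_cosh s).const_mul z)
  refine (hnum.div (hasDerivAt_geodesicDen s) (geodesicDen_ne_zero hz hζ s)).congr_deriv ?_
  have hcosh : (Real.cosh s : ℂ) ^ 2 - (Real.sinh s : ℂ) ^ 2 = 1 := by
    exact_mod_cast Real.cosh_sq_sub_sinh_sq s
  rw [Complex.ofReal_sub, Complex.ofReal_one, Complex.normSq_eq_conj_mul_self]
  congr 1
  simp only [geodesicDen]
  linear_combination (ζ - (starRingEnd ℂ) z * z * ζ) * hcosh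

theorem one_sub_sq_norm_geodesicFrom_mul (hz : z ∈ ball (0 : ℂ) 1) (hζ : ‖ζ‖ = 1) (s : ℝ) :
    (1 - ‖geodesicFrom z ζ s‖ ^ 2) * normSq (geodesicDen z ζ s) = 1 - normSq z := by
  have hM := Complex.normSq_pos.2 (geodesicDen_ne_zero hz hζ s)
  rw [← Complex.normSq_eq_norm_sq, geodesicFrom, Complex.normSq_div,
    ← normSq_geodesicDen_sub hζ s]
  field_simp

theorem geodesicFrom_mem_ball (hz : z ∈ ball (0 : ℂ) 1) (hζ : ‖ζ‖ = 1) (s : ℝ) :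
    geodesicFrom z ζ s ∈ ball (0 : ℂ) 1 := by
  have h := one_sub_sq_norm_geodesicFrom_mul hz hζ s
  have hM := Complex.normSq_pos.2 (geodesicDen_ne_zero hz hζ s)
  have := normSq_lt_one_of_mem_ball hz
  have hpos : 0 < 1 - ‖geodesicFrom z ζ s‖ ^ 2 :=
    (mul_pos_iff_of_pos_right hM).1 (by rw [h]; linarith)
  rw [mem_ball_zero_iff]
  nlinarith [norm_nonneg (geodesicFrom z ζ s)]

theorem norm_deriv_geodesicFrom (hz : z ∈ ball (0 : ℂ) 1) (hζ : ‖ζ‖ = 1) (s : ℝ) :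
    ‖ζ * ((1 - normSq z : ℝ) : ℂ) / geodesicDen z ζ s ^ 2‖ = 1 - ‖geodesicFrom z ζ s‖ ^ 2 := by
  have hM := Complex.normSq_pos.2 (geodesicDen_ne_zero hz hζ s)
  have := normSq_lt_one_of_mem_ball hz
  rw [norm_div, norm_mul, hζ, one_mul, norm_pow, Complex.sq_norm, Complex.norm_real,
    Real.norm_of_nonneg (by linarith), ← one_sub_sq_norm_geodesicFrom_mul hz hζ s,
    mul_div_cancel_right₀ _ hM.ne']

@[simp]
theorem geodesicFrom_zero : geodesicFrom z ζ 0 = z := by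
  simp [geodesicFrom, geodesicDen]

theorem geodesicFrom_eq_tanh (z ζ : ℂ) (s : ℝ) :
    geodesicFrom z ζ s =
      ((Real.tanh s : ℂ) * ζ + z) / (1 + (starRingEnd ℂ) z * ((Real.tanh s : ℂ) * ζ)) := by
  have hcosh : (Real.cosh s : ℂ) ≠ 0 := Complex.ofReal_ne_zero.2 (Real.cosh_pos s).ne'
  rw [geodesicFrom, geodesicDen, Real.tanh_eq_sinh_div_cosh, Complex.ofReal_div,
    ← div_div_div_cancel_right₀ hcosh]
  congr 1 <;> field_simp

theorem geodesicFrom_ne_self (hz : z ∈ ball (0 : ℂ) 1) (hζ : ‖ζ‖ = 1) (hs : s ≠ 0) :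
    geodesicFrom z ζ s ≠ z := by
  rw [geodesicFrom, Ne, div_eq_iff (geodesicDen_ne_zero hz hζ s), geodesicDen]
  intro h
  have h' : ζ * Real.sinh s * ((1 - normSq z : ℝ) : ℂ) = 0 := by
    rw [Complex.ofReal_sub, Complex.ofReal_one, Complex.normSq_eq_conj_mul_self]
    linear_combination h
  simp only [mul_eq_zero, Complex.ofReal_eq_zero, Real.sinh_eq_zero, sub_eq_zero] at h'
  rcases h' with (h' | h') | h'
  · simp [h'] at hζ
  · exact hs h'
  · exact (normSq_lt_one_of_mem_ball hz).ne h'.symm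

theorem tendsto_geodesicFrom_nhdsGT_zero (hz : z ∈ ball (0 : ℂ) 1) (hζ : ‖ζ‖ = 1) :
    Tendsto (geodesicFrom z ζ) (𝓝[>] 0) (𝓝[≠] z) := by
  refine tendsto_nhdsWithin_of_tendsto_nhds_of_eventually_within _ ?_ ?_
  · have h := (hasDerivAt_geodesicFrom hz hζ 0).continuousAt.tendsto
    rw [geodesicFrom_zero] at h
    exact h.mono_left nhdsWithin_le_nhds
  · filter_upwards [self_mem_nhdsWithin] with s hs
    exact geodesicFrom_ne_self hz hζ (ne_of_gt hs)

end Geodesic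

theorem exists_geodesicFrom_mapsTo_geoSeg {z w : ℂ} (hz : z ∈ ball (0 : ℂ) 1)
    (hw : w ∈ ball (0 : ℂ) 1) (hne : z ≠ w) :
    ∃ ζ : ℂ, ∃ S : ℝ, ‖ζ‖ = 1 ∧ 0 < S ∧ geodesicFrom z ζ S = w ∧
      MapsTo (geodesicFrom z ζ) (Icc 0 S) (geoSeg z w) := by
  set a := (w - z) / (1 - (starRingEnd ℂ) z * w) with ha
  have ha0 : 0 < ‖a‖ :=
    norm_pos_iff.2 (div_ne_zero (sub_ne_zero.2 hne.symm) (one_sub_conj_mul_ne_zero hz hw))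
  have ha1 : ‖a‖ < 1 := norm_mobius_lt_one hz hw
  have htanh : Real.tanh (Real.artanh ‖a‖) = ‖a‖ := Real.tanh_artanh ⟨by linarith, ha1⟩
  have hζa : ∀ x : ℝ, ((x / ‖a‖ : ℝ) : ℂ) * a = (x : ℂ) * (a / ‖a‖) := fun x => by
    push_cast; ring
  refine ⟨a / ‖a‖, Real.artanh ‖a‖, ?_, Real.artanh_pos ⟨ha0, ha1⟩, ?_, ?_⟩
  · rw [norm_div, Complex.norm_real, Real.norm_of_nonneg ha0.le, div_self ha0.ne']
  · rw [geodesicFrom_eq_tanh, htanh, ← hζa, div_self ha0.ne', Complex.ofReal_one, one_mul]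
    exact mobius_inv_mobius hz hw
  · intro s hs
    refine ⟨Real.tanh s / ‖a‖, ⟨?_, ?_⟩, ?_⟩
    · rw [Real.tanh_eq_sinh_div_cosh]
      exact div_nonneg (div_nonneg (Real.sinh_nonneg_iff.2 hs.1) (Real.cosh_pos s).le) ha0.le
    · rw [div_le_one ha0]
      by_contra! hlt
      have := Real.artanh_lt_artanh (by linarith) (Real.tanh_lt_one s) hlt
      rw [Real.artanh_tanh] at this
      exact (this.trans_le hs.2).false
    · dsimp only
      rw [← ha, hζa, geodesicFrom_eq_tanh]

theorem AnalyticOnNhd.eqOn_zero_of_tendsto_of_eventually_eq_zero {𝕜 E α : Type*}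
    [NontriviallyNormedField 𝕜] [NormedAddCommGroup E] [NormedSpace 𝕜 E] {f : 𝕜 → E}
    {U : Set 𝕜} {z₀ : 𝕜} {Γ : α → 𝕜} {l : Filter α} [l.NeBot] (hf : AnalyticOnNhd 𝕜 f U)
    (hU : IsPreconnected U) (h₀ : z₀ ∈ U) (hΓ : Tendsto Γ l (𝓝[≠] z₀))
    (hzero : ∀ᶠ s in l, f (Γ s) = 0) : EqOn f 0 U :=
  hf.eqOn_zero_of_preconnected_of_frequently_eq_zero hU h₀ (hΓ.frequently hzero.frequently)

theorem eqOn_zero_along_geodesicFrom {A f : ℂ → ℂ} (hf : DifferentiableOn ℂ f (ball 0 1))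
    (hode : ∀ z ∈ ball (0 : ℂ) 1, deriv (deriv f) z + A z * f z = 0) {z ζ : ℂ}
    (hz : z ∈ ball (0 : ℂ) 1) (hζ : ‖ζ‖ = 1) {S : ℝ}
    (hA : ∀ s ∈ Icc 0 S, (1 - ‖geodesicFrom z ζ s‖ ^ 2) ^ 2 * ‖A (geodesicFrom z ζ s)‖ ≤ 1)
    (h0 : f z = 0) (hS : f (geodesicFrom z ζ S) = 0) :
    EqOn (f ∘ geodesicFrom z ζ) 0 (Icc 0 S) := by
  set Γ := geodesicFrom z ζ with hΓ
  set M := geodesicDen z ζ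
  set M' : ℝ → ℂ := fun s => Real.sinh s + (starRingEnd ℂ) z * ζ * Real.cosh s
  set c : ℂ := ζ * ((1 - normSq z : ℝ) : ℂ)
  have hM0 : ∀ s, M s ≠ 0 := geodesicDen_ne_zero hz hζ
  have hball : ∀ s, ball (0 : ℂ) 1 ∈ 𝓝 (Γ s) :=
    fun s => isOpen_ball.mem_nhds (geodesicFrom_mem_ball hz hζ s)
  have hf₁ : ∀ s, HasDerivAt f (deriv f (Γ s)) (Γ s) :=
    fun s => (hf.differentiableAt (hball s)).hasDerivAt
  have hf₂ : ∀ s, HasDerivAt (deriv f) (deriv (deriv f) (Γ s)) (Γ s) :=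
    fun s => ((hf.deriv isOpen_ball).differentiableAt (hball s)).hasDerivAt
  have hG₁ : ∀ s, HasDerivAt (fun s => f (Γ s) * M s)
      (deriv f (Γ s) * c / M s + f (Γ s) * M' s) s :=
    fun s => hasDerivAt_comp_mul (hf₁ s) (hasDerivAt_geodesicFrom hz hζ s)
      (hasDerivAt_geodesicDen s) (hM0 s)
  have hG₂ : ∀ s, HasDerivAt (fun s => deriv f (Γ s) * c / M s + f (Γ s) * M' s)
      ((1 - A (Γ s) * (c / M s ^ 2) ^ 2) * (f (Γ s) * M s)) s := fun s =>
    hasDerivAt_deriv_comp_mul_of_ode (hf₁ s) (hf₂ s)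
      (hode _ (geodesicFrom_mem_ball hz hζ s)) (hasDerivAt_geodesicFrom hz hζ s)
      (hasDerivAt_geodesicDen s) ((hasDerivAt_deriv_geodesicDen s).congr_deriv (one_mul _).symm)
      (hM0 s)
  have hcoeff : ∀ s ∈ Icc 0 S, 0 ≤ (1 - A (Γ s) * (c / M s ^ 2) ^ 2).re := by
    intro s hs
    have hnorm : ‖A (Γ s) * (c / M s ^ 2) ^ 2‖ ≤ 1 := by
      rw [norm_mul, norm_pow, norm_deriv_geodesicFrom hz hζ s, mul_comm]
      exact hA s hs
    rw [Complex.sub_re, Complex.one_re, sub_nonneg]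
    exact (Complex.re_le_norm _).trans hnorm
  have hG : EqOn (fun s => f (Γ s) * M s) 0 (Icc 0 S) :=
    eqOn_zero_of_inner_deriv2_nonneg (fun s _ => (hG₁ s).continuousAt.continuousWithinAt)
      (fun s _ => hG₁ s) (fun s _ => hG₂ s)
      (fun s hs => Complex.real_inner_mul_self_nonneg (hcoeff s (Ioo_subset_Icc_self hs)) _)
      (by simp [hΓ, h0]) (by simp only [hS, zero_mul])
  intro s hs
  exact (mul_eq_zero.1 (hG hs)).resolve_right (hM0 s)

theorem exists_large_A_on_geodesic_between_zeros_general (A f : ℂ → ℂ)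
    (hf : DifferentiableOn ℂ f (ball (0 : ℂ) 1))
    (hode : ∀ z ∈ ball (0 : ℂ) 1, deriv (deriv f) z + A z * f z = 0)
    (hnt : ∃ z ∈ ball (0 : ℂ) 1, f z ≠ 0)
    (z₁ z₂ : ℂ) (h₁ : z₁ ∈ ball (0 : ℂ) 1) (h₂ : z₂ ∈ ball (0 : ℂ) 1)
    (hz₁ : f z₁ = 0) (hz₂ : f z₂ = 0) (hne : z₁ ≠ z₂) :
    ∃ ξ ∈ geoSeg z₁ z₂, 1 < (1 - ‖ξ‖ ^ 2) ^ 2 * ‖A ξ‖ := by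
  by_contra! hsmall
  obtain ⟨ζ, S, hζ, hS, hend, hseg⟩ := exists_geodesicFrom_mapsTo_geoSeg h₁ h₂ hne
  have hvanish := eqOn_zero_along_geodesicFrom hf hode h₁ hζ
    (fun s hs => hsmall _ (hseg hs)) hz₁ (hend ▸ hz₂)
  have hfzero : EqOn f 0 (ball 0 1) :=
    (hf.analyticOnNhd isOpen_ball).eqOn_zero_of_tendsto_of_eventually_eq_zero
      (convex_ball 0 1).isPreconnected h₁ (tendsto_geodesicFrom_nhdsGT_zero h₁ hζ)
      (by filter_upwards [Ioo_mem_nhdsGT hS] with s hs using hvanish ⟨hs.1.le, hs.2.le⟩)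
  obtain ⟨w, hw, hfw⟩ := hnt
  exact hfw (hfzero hw)

/-- Nehari-type criterion along geodesics: between two zeros of a nontrivial solution
there is a point where `(1-|ξ|²)²|A(ξ)| > 1`. -/
theorem exists_large_A_on_geodesic_between_zeros (A f : ℂ → ℂ)
    (hA : DifferentiableOn ℂ A (ball (0 : ℂ) 1))
    (hf : DifferentiableOn ℂ f (ball (0 : ℂ) 1))
    (hode : ∀ z ∈ ball (0 : ℂ) 1, deriv (deriv f) z + A z * f z = 0)
    (hnt : ∃ z ∈ ball (0 : ℂ) 1, f z ≠ 0)
    (z₁ z₂ : ℂ) (h₁ : z₁ ∈ ball (0 : ℂ) 1) (h₂ : z₂ ∈ ball (0 : ℂ) 1)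
    (hz₁ : f z₁ = 0) (hz₂ : f z₂ = 0) (hne : z₁ ≠ z₂) :
    ∃ ξ ∈ geoSeg z₁ z₂, 1 < (1 - ‖ξ‖ ^ 2) ^ 2 * ‖A ξ‖ :=
  exists_large_A_on_geodesic_between_zeros_general A f hf hode hnt z₁ z₂ h₁ h₂ hz₁ hz₂ hne
end
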